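/- arXiv:math/0105065 — 3 statements merged into one kernel-verified Lean document; each statement's English description precedes it below -/
import Mathlib

section
/- Let A and B be finite linearly ordered alphabets, and order their disjoint union A ⊕ B so that every element of A is smaller than every element of B. Let π : ℚ⟨A ⊕ B⟩ → ℚ⟨A⟩ ⊗_ℚ ℚ⟨B⟩ be the algebra homomorphism determined by π(a) = a ⊗ 1 for a ∈ A and π(b) = 1 ⊗ b for b ∈ B. Then for every σ ∈ Sₙ, π(F_σ(A ⊕ B)) = Σ_{k=0}^{n} F_{Std(σ(1)⋯σ(k))}(A) ⊗ F_{Std(σ(k+1)⋯σ(n))}(B), where the standardizations of the prefix and suffix of the one-line word of σ are permutations in S_k and S_{n−k}, and F of the empty permutation is 1. (This is the coproduct formula Δ F_σ = Σ_{u·v=σ} F_{Std(u)} ⊗ F_{Std(v)} of the bialgebra FQSym.) -/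
/-!
A permutation `τ` is the standardization of `w` iff the pairs `(w (τ⁻¹ r), τ⁻¹ r)` increase
lexicographically in `r`. For `Std w = σ⁻¹` this makes `w ∘ σ` weakly increasing; as every letter
of `A` lies below every letter of `B`, `w ∘ σ` is a block of `k` letters of `A` followed by
`n - k` letters of `B`. So the letters of `w` in `A` sit at the positions `σ(1), …, σ(k)`, and
`π w = w|_A ⊗ w|_B`, where by the same criterion `w|_A` and `w|_B` have standardizations
`Std(σ(1)⋯σ(k))⁻¹` and `Std(σ(k+1)⋯σ(n))⁻¹`. Conversely every such pair of words glues back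
along `σ` to a word of `F_σ(A ⊕ B)`, so for each `k` the words of `F_σ(A ⊕ B)` with `k` letters
in `A` are in bijection with the terms of the `k`-th summand.
-/

open scoped Classical

noncomputable section

def IsStd {A : Type*} [LinearOrder A] {n : ℕ} (w : Fin n → A) (σ : Equiv.Perm (Fin n)) : Prop :=
  ∀ i j : Fin n, i < j → (σ i < σ j ↔ w i ≤ w j)

theorem exists_isStd {A : Type*} [LinearOrder A] {n : ℕ} (w : Fin n → A) :
    ∃ σ : Equiv.Perm (Fin n), IsStd w σ := by
  refine ⟨(Tuple.sort w)⁻¹, ?_⟩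
  have hmono : Monotone (w ∘ (Tuple.sort w)) := Tuple.monotone_sort w
  have hstab : ∀ i j, i < j → w (Tuple.sort w i) = w (Tuple.sort w j) →
      Tuple.sort w i < Tuple.sort w j :=
    (Tuple.eq_sort_iff.1 rfl).2
  intro i j hij
  constructor
  · intro h
    have := hmono h.le
    simpa using this
  · intro hw
    rcases lt_trichotomy ((Tuple.sort w)⁻¹ i) ((Tuple.sort w)⁻¹ j) with h | h | h
    · exact h
    · exact absurd (congrArg (Tuple.sort w) h) (by simp [hij.ne])
    · exfalso
      have h1 : w j ≤ w i := by simpa using hmono h.le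
      have h2 : w j = w i := le_antisymm h1 hw
      have := hstab _ _ h (by simpa using h2)
      simp at this
      exact absurd this (not_lt.2 hij.le)

/-- The standardization of a word, defined via unique choice from `IsStd`. -/
def std {A : Type*} [LinearOrder A] {n : ℕ} (w : Fin n → A) : Equiv.Perm (Fin n) :=
  Classical.choose (exists_isStd w)


/-- A word `w : Fin n → A` viewed as an element of `ℚ⟨A⟩`. -/
def wordAlg {A : Type*} {n : ℕ} (w : Fin n → A) : MonoidAlgebra ℚ (FreeMonoid A) :=
  MonoidAlgebra.of ℚ (FreeMonoid A) (FreeMonoid.ofList (List.ofFn w))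

/-- The free quasi-ribbon `F_σ(A) = Σ_{w : Std(w) = σ⁻¹} w ∈ ℚ⟨A⟩`. -/
def FQR (A : Type*) [LinearOrder A] [Fintype A] {n : ℕ} (σ : Equiv.Perm (Fin n)) :
    MonoidAlgebra ℚ (FreeMonoid A) :=
  ∑ w ∈ Finset.univ.filter (fun w : Fin n → A => std w = σ⁻¹), wordAlg w

/-- The algebra homomorphism `π : ℚ⟨A ⊕ B⟩ → ℚ⟨A⟩ ⊗ ℚ⟨B⟩` determined by
`a ↦ a ⊗ 1` for `a ∈ A` and `b ↦ 1 ⊗ b` for `b ∈ B`. -/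
def piHom (A B : Type*) [LinearOrder A] [LinearOrder B] :
    MonoidAlgebra ℚ (FreeMonoid (A ⊕ₗ B)) →ₐ[ℚ]
      (TensorProduct ℚ (MonoidAlgebra ℚ (FreeMonoid A)) (MonoidAlgebra ℚ (FreeMonoid B))) :=
  MonoidAlgebra.lift ℚ _ (FreeMonoid (A ⊕ₗ B))
    (FreeMonoid.lift fun x =>
      Sum.elim
        (fun a => (MonoidAlgebra.of ℚ (FreeMonoid A) (FreeMonoid.of a)) ⊗ₜ[ℚ] 1)
        (fun b => 1 ⊗ₜ[ℚ] (MonoidAlgebra.of ℚ (FreeMonoid B) (FreeMonoid.of b)))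
        (ofLex x))

section Standardization

variable {α : Type*} [LinearOrder α] {n : ℕ} {w : Fin n → α} {τ τ' : Equiv.Perm (Fin n)}

theorem isStd_iff_lt_iff_toLex_lt :
    IsStd w τ ↔ ∀ i j, τ i < τ j ↔ toLex (w i, i) < toLex (w j, j) := by
  refine ⟨fun h i j => ?_, fun h i j hij => ?_⟩
  · rcases lt_trichotomy i j with hij | rfl | hij
    · simp [Prod.Lex.toLex_lt_toLex, h i j hij, hij, le_iff_lt_or_eq]
    · simp
    · rw [← not_iff_not, not_lt, (τ.injective.ne hij.ne).le_iff_lt, h j i hij,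
        Prod.Lex.toLex_lt_toLex]
      simp [hij.not_gt]
  · simp [h, Prod.Lex.toLex_lt_toLex, hij, le_iff_lt_or_eq]

theorem isStd_iff_strictMono :
    IsStd w τ ↔ StrictMono fun r => toLex (w (τ.symm r), τ.symm r) := by
  rw [isStd_iff_lt_iff_toLex_lt]
  refine ⟨fun h r s hrs => (h _ _).1 (by simpa using hrs), fun h i j => ?_⟩
  simpa using (h.lt_iff_lt (a := τ i) (b := τ j)).symm

theorem IsStd.lt_iff_lt (h : IsStd w τ) (hw : Function.Injective w) (i j : Fin n) :
    τ i < τ j ↔ w i < w j := by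
  rw [isStd_iff_lt_iff_toLex_lt.1 h, Prod.Lex.toLex_lt_toLex]
  exact ⟨fun h => h.elim id fun ⟨he, hlt⟩ => absurd (hw he) hlt.ne, Or.inl⟩

theorem IsStd.strictMono_comp_symm (h : IsStd w τ) (hw : Function.Injective w) :
    StrictMono (w ∘ τ.symm) := fun r s hrs =>
  (h.lt_iff_lt hw _ _).1 (by simpa using hrs)

theorem IsStd.monotone_comp_symm (h : IsStd w τ) : Monotone (w ∘ τ.symm) := fun _ _ hrs =>
  Prod.Lex.monotone_fst _ _ ((isStd_iff_strictMono.1 h).monotone hrs)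

theorem IsStd.unique (h : IsStd w τ) (h' : IsStd w τ') : τ = τ' := by
  have hrange (ρ : Equiv.Perm (Fin n)) :
      Set.range (fun r => toLex (w (ρ.symm r), ρ.symm r)) = Set.range fun i => toLex (w i, i) :=
    ρ.symm.surjective.range_comp fun i => toLex (w i, i)
  have heq := (StrictMono.range_inj (isStd_iff_strictMono.1 h)
    (isStd_iff_strictMono.1 h')).1 ((hrange τ).trans (hrange τ').symm)
  exact Equiv.symm_bijective.injective <| Equiv.ext fun r => congrArg (fun f => (ofLex (f r)).2) heq

theorem std_isStd (w : Fin n → α) : IsStd w (std w) :=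
  Classical.choose_spec (exists_isStd w)

theorem std_eq_iff : std w = τ ↔ IsStd w τ :=
  ⟨fun h => h ▸ std_isStd w, (std_isStd w).unique⟩

end Standardization

theorem filterMap_ofFn_eq_ofFn_of_strictMono {C D : Type*} {n m : ℕ} {w : Fin n → C}
    {f : C → Option D} {e : Fin m → Fin n} {u : Fin m → D} (he : StrictMono e)
    (hsome : ∀ c, f (w (e c)) = some (u c)) (hnone : ∀ i ∉ Set.range e, f (w i) = none) :
    (List.ofFn w).filterMap f = List.ofFn u := by
  have hsorted : (List.finRange n).filter (· ∈ Set.range e) = List.ofFn e :=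
    ((List.pairwise_lt_finRange n).filter _).eq_of_mem_iff
      (List.pairwise_ofFn.2 fun _ _ h => he h) (by simp)
  calc (List.ofFn w).filterMap f
      = ((List.finRange n).filter (· ∈ Set.range e)).filterMap (f ∘ w) := by
        rw [List.filterMap_filter, List.ofFn_eq_map, List.filterMap_map]
        refine List.filterMap_congr fun i _ => ?_
        by_cases hi : i ∈ Set.range e <;> simp [hi, hnone]
    _ = List.ofFn u := by
        rw [hsorted, List.ofFn_eq_map, List.filterMap_map, List.ofFn_eq_map,
          ← List.filterMap_eq_map]
        exact List.filterMap_congr fun c _ => hsome c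

section CoproductOfWords

variable {A B : Type*} [LinearOrder A] [LinearOrder B]

theorem piHom_of_ofList (l : List (A ⊕ₗ B)) :
    piHom A B (MonoidAlgebra.of ℚ _ (FreeMonoid.ofList l)) =
      MonoidAlgebra.of ℚ _ (FreeMonoid.ofList (l.filterMap fun x => (ofLex x).getLeft?)) ⊗ₜ[ℚ]
        MonoidAlgebra.of ℚ _ (FreeMonoid.ofList (l.filterMap fun x => (ofLex x).getRight?)) := by
  induction l with
  | nil =>
    simp only [List.filterMap_nil, FreeMonoid.ofList_nil, map_one, Algebra.TensorProduct.one_def]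
  | cons x l ih =>
    rw [FreeMonoid.ofList_cons, map_mul, map_mul, ih, piHom, MonoidAlgebra.lift_of,
      FreeMonoid.lift_eval_of]
    rcases h : ofLex x with a | b <;>
      simp [h, FreeMonoid.ofList_cons, Algebra.TensorProduct.tmul_mul_tmul]

theorem piHom_wordAlg {n m m' : ℕ} {w : Fin n → A ⊕ₗ B} {u : Fin m → A} {v : Fin m' → B}
    (hu : (List.ofFn w).filterMap (fun x => (ofLex x).getLeft?) = List.ofFn u)
    (hv : (List.ofFn w).filterMap (fun x => (ofLex x).getRight?) = List.ofFn v) :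
    piHom A B (wordAlg w) = wordAlg u ⊗ₜ[ℚ] wordAlg v := by
  rw [wordAlg, piHom_of_ofList, hu, hv, wordAlg, wordAlg]

end CoproductOfWords

open scoped Finset

theorem Fin.val_lt_card_filter_iff {n : ℕ} {P : Fin n → Prop} [DecidablePred P]
    (hP : IsLowerSet {r | P r}) (r : Fin n) : (r : ℕ) < #{s | P s} ↔ P r := by
  constructor
  · intro hlt
    by_contra hr
    have hsub : ({s | P s} : Finset (Fin n)) ⊆ Finset.Iio r := fun s hs => by
      simp only [Finset.mem_filter, Finset.mem_univ, true_and] at hs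
      exact Finset.mem_Iio.2 (lt_of_not_ge fun hrs => hr (hP hrs hs))
    have := Finset.card_le_card hsub
    rw [Fin.card_Iio] at this
    omega
  · intro hr
    have hsub : Finset.Iic r ⊆ ({s | P s} : Finset (Fin n)) := fun s hs => by
      simpa using hP (Finset.mem_Iic.1 hs) hr
    have := Finset.card_le_card hsub
    rw [Fin.card_Iic] at this
    omega

section BlockWord

variable {A B : Type*} {n : ℕ} (k : Fin (n + 1))

def headPos (c : Fin k) : Fin n := ⟨c, c.2.trans_le k.is_le⟩

def tailPos (c : Fin (n - k)) : Fin n := ⟨k + c, Nat.add_lt_of_lt_sub' c.2⟩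

theorem headPos_strictMono : StrictMono (headPos k) := fun _ _ h => h

theorem tailPos_strictMono : StrictMono (tailPos k) := fun _ _ h => by
  simp only [tailPos, Fin.mk_lt_mk]
  exact Nat.add_lt_add_left h k

theorem headPos_lt_tailPos (c : Fin k) (d : Fin (n - k)) : headPos k c < tailPos k d := by
  simp only [headPos, tailPos, Fin.mk_lt_mk]
  omega

theorem exists_headPos_or_tailPos (r : Fin n) :
    (∃ c, headPos k c = r) ∨ ∃ c, tailPos k c = r := by
  by_cases h : (r : ℕ) < k
  · exact .inl ⟨⟨r, h⟩, rfl⟩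
  · exact .inr ⟨⟨r - k, by omega⟩, Fin.ext (by simp [tailPos]; omega)⟩

def blockWord (a : Fin k → A) (b : Fin (n - k) → B) : Fin n → A ⊕ₗ B := fun r =>
  if h : (r : ℕ) < k then toLex (.inl (a ⟨r, h⟩)) else toLex (.inr (b ⟨r - k, by omega⟩))

variable {k} {a : Fin k → A} {b : Fin (n - k) → B}

@[simp]
theorem blockWord_headPos (c : Fin k) : blockWord k a b (headPos k c) = toLex (.inl (a c)) := by
  simp [blockWord, headPos]

@[simp]
theorem blockWord_tailPos (c : Fin (n - k)) :
    blockWord k a b (tailPos k c) = toLex (.inr (b c)) := by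
  simp [blockWord, tailPos]

theorem blockWord_inj {a' : Fin k → A} {b' : Fin (n - k) → B} :
    blockWord k a b = blockWord k a' b' ↔ a = a' ∧ b = b' := by
  refine ⟨fun h => ⟨funext fun c => ?_, funext fun c => ?_⟩, fun ⟨ha, hb⟩ => ha ▸ hb ▸ rfl⟩
  · simpa using congrFun h (headPos k c)
  · simpa using congrFun h (tailPos k c)

def numLeft (x : Fin n → A ⊕ₗ B) : Fin (n + 1) :=
  ⟨#{r | (ofLex (x r)).isLeft},
    Nat.lt_succ_of_le ((Finset.card_filter_le _ _).trans_eq (Finset.card_fin n))⟩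

theorem numLeft_blockWord : numLeft (blockWord k a b) = k := by
  have hleft (r : Fin n) : (ofLex (blockWord k a b r)).isLeft ↔ (r : ℕ) < k := by
    unfold blockWord
    split_ifs with h <;> simp [h]
  ext
  simp only [numLeft, hleft, Fin.card_filter_val_lt]
  exact min_eq_right k.is_le

theorem exists_eq_blockWord [LinearOrder A] [LinearOrder B] {x : Fin n → A ⊕ₗ B}
    (hx : Monotone x) (hk : numLeft x = k) : ∃ a b, x = blockWord k a b := by
  subst hk
  have hlower : IsLowerSet {r | (ofLex (x r)).isLeft} := fun r s hsr hr => by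
    rcases hs : ofLex (x s) with a | b
    · simp [hs]
    · obtain ⟨a, ha⟩ := Sum.isLeft_iff.1 hr
      have := hx hsr
      rw [← toLex_ofLex (x s), ← toLex_ofLex (x r), hs, ha] at this
      exact absurd this Sum.Lex.not_inr_le_inl
  have hleft (r : Fin n) : (ofLex (x r)).isLeft ↔ (r : ℕ) < numLeft x :=
    (Fin.val_lt_card_filter_iff hlower r).symm
  have hhead (c : Fin (numLeft x)) : ∃ a, x (headPos _ c) = toLex (.inl a) :=
    Sum.isLeft_iff.1 ((hleft _).2 c.2)
  have htail (c : Fin (n - numLeft x)) : ∃ b, x (tailPos _ c) = toLex (.inr b) :=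
    Sum.isRight_iff.1 (Sum.not_isLeft.1 fun h => by simpa [tailPos] using (hleft _).1 h)
  choose a ha using hhead
  choose b hb using htail
  refine ⟨a, b, funext fun r => ?_⟩
  obtain ⟨c, rfl⟩ | ⟨c, rfl⟩ := exists_headPos_or_tailPos (numLeft x) r
  · simp [ha]
  · simp [hb]

theorem strictMono_blockWord_iff [LinearOrder A] [LinearOrder B] {β : Type*} [Preorder β]
    (f : Fin n → β) :
    StrictMono (fun r => toLex (blockWord k a b r, f r)) ↔
      StrictMono (fun c => toLex (a c, f (headPos k c))) ∧
        StrictMono (fun c => toLex (b c, f (tailPos k c))) := by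
  refine ⟨fun h => ⟨fun c d hcd => ?_, fun c d hcd => ?_⟩, fun ⟨hh, ht⟩ r s hrs => ?_⟩
  · simpa [Prod.Lex.toLex_lt_toLex] using h (headPos_strictMono k hcd)
  · simpa [Prod.Lex.toLex_lt_toLex] using h (tailPos_strictMono k hcd)
  obtain ⟨c, rfl⟩ | ⟨c, rfl⟩ := exists_headPos_or_tailPos k r <;>
    obtain ⟨d, rfl⟩ | ⟨d, rfl⟩ := exists_headPos_or_tailPos k s
  · simpa [Prod.Lex.toLex_lt_toLex] using hh ((headPos_strictMono k).lt_iff_lt.1 hrs)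
  · simp [Prod.Lex.toLex_lt_toLex]
  · exact absurd hrs (headPos_lt_tailPos k d c).not_gt
  · simpa [Prod.Lex.toLex_lt_toLex] using ht ((tailPos_strictMono k).lt_iff_lt.1 hrs)

end BlockWord

theorem isStd_inv_std_iff {C α : Type*} [LinearOrder C] [LinearOrder α] {m : ℕ}
    {g : Fin m → α} (hg : Function.Injective g) {y : Fin m → C} :
    IsStd y (std g)⁻¹ ↔ StrictMono fun c => toLex (y (std g c), g c) := by
  rw [isStd_iff_strictMono, Equiv.Perm.inv_def, Equiv.symm_symm]
  simp only [StrictMono, Prod.Lex.toLex_lt_toLex, (std_isStd g).lt_iff_lt hg]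

section Fiber

variable {A B : Type*} [LinearOrder A] [LinearOrder B] {n : ℕ} (σ : Equiv.Perm (Fin n))
  (k : Fin (n + 1))

theorem isStd_blockWord_comp_symm_iff {u : Fin k → A} {v : Fin (n - k) → B} :
    IsStd (blockWord k (u ∘ std (σ ∘ headPos k)) (v ∘ std (σ ∘ tailPos k)) ∘ σ.symm) σ⁻¹ ↔
      IsStd u (std (σ ∘ headPos k))⁻¹ ∧ IsStd v (std (σ ∘ tailPos k))⁻¹ := by
  rw [isStd_iff_strictMono,
    isStd_inv_std_iff (σ.injective.comp (headPos_strictMono k).injective),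
    isStd_inv_std_iff (σ.injective.comp (tailPos_strictMono k).injective)]
  simp only [Equiv.Perm.inv_def, Equiv.symm_symm, Function.comp_apply, Equiv.symm_apply_apply]
  exact strictMono_blockWord_iff σ

theorem piHom_wordAlg_blockWord_comp_symm (u : Fin k → A) (v : Fin (n - k) → B) :
    piHom A B (wordAlg (blockWord k (u ∘ std (σ ∘ headPos k)) (v ∘ std (σ ∘ tailPos k)) ∘
      σ.symm)) = wordAlg u ⊗ₜ[ℚ] wordAlg v := by
  have hhead := (std_isStd (σ ∘ headPos k)).strictMono_comp_symm
    (σ.injective.comp (headPos_strictMono k).injective)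
  have htail := (std_isStd (σ ∘ tailPos k)).strictMono_comp_symm
    (σ.injective.comp (tailPos_strictMono k).injective)
  apply piHom_wordAlg
  · refine filterMap_ofFn_eq_ofFn_of_strictMono hhead (fun c => by simp) fun i hi => ?_
    obtain ⟨c, hc⟩ | ⟨c, hc⟩ := exists_headPos_or_tailPos k (σ.symm i)
    · exact absurd ⟨std (σ ∘ headPos k) c, by simp [hc]⟩ hi
    · simp [← hc]
  · refine filterMap_ofFn_eq_ofFn_of_strictMono htail (fun c => by simp) fun i hi => ?_
    obtain ⟨c, hc⟩ | ⟨c, hc⟩ := exists_headPos_or_tailPos k (σ.symm i)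
    · simp [← hc]
    · exact absurd ⟨std (σ ∘ tailPos k) c, by simp [hc]⟩ hi

theorem sum_piHom_wordAlg_fiber [Fintype A] [Fintype B] :
    ∑ w ∈ {w : Fin n → A ⊕ₗ B | std w = σ⁻¹} with numLeft (w ∘ σ) = k,
        piHom A B (wordAlg w) =
      FQR A (std (σ ∘ headPos k)) ⊗ₜ[ℚ] FQR B (std (σ ∘ tailPos k)) := by
  set p := std (σ ∘ headPos k)
  set q := std (σ ∘ tailPos k)
  rw [FQR, FQR, TensorProduct.sum_tmul]
  simp_rw [TensorProduct.tmul_sum]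
  rw [← Finset.sum_product']
  symm
  refine Finset.sum_nbij (fun uv => blockWord k (uv.1 ∘ p) (uv.2 ∘ q) ∘ σ.symm) ?_ ?_ ?_ ?_
  · rintro ⟨u, v⟩ huv
    simp only [Finset.mem_product, Finset.mem_filter, Finset.mem_univ, true_and,
      std_eq_iff] at huv ⊢
    refine ⟨(isStd_blockWord_comp_symm_iff σ k).2 huv, ?_⟩
    simpa [Function.comp_assoc] using numLeft_blockWord
  · rintro ⟨u, v⟩ - ⟨u', v'⟩ - h
    have h' := congrArg (· ∘ σ) h
    simp only [Function.comp_assoc, Equiv.symm_comp_self, Function.comp_id, blockWord_inj] at h'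
    exact Prod.ext (p.surjective.injective_comp_right h'.1)
      (q.surjective.injective_comp_right h'.2)
  · intro w hw
    simp only [Finset.mem_coe, Finset.mem_filter, Finset.mem_univ, true_and, std_eq_iff] at hw
    have hmono : Monotone (w ∘ σ) := hw.1.monotone_comp_symm
    obtain ⟨a, b, hab⟩ := exists_eq_blockWord hmono hw.2
    have hw' : blockWord k ((a ∘ p.symm) ∘ p) ((b ∘ q.symm) ∘ q) ∘ σ.symm = w := by
      simp [Function.comp_assoc, ← hab]
    refine ⟨(a ∘ p.symm, b ∘ q.symm), ?_, hw'⟩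
    simpa [std_eq_iff] using (isStd_blockWord_comp_symm_iff σ k).1 (hw' ▸ hw.1)
  · rintro ⟨u, v⟩ -
    exact (piHom_wordAlg_blockWord_comp_symm σ k u v).symm

end Fiber

/-- coproduct formula for `FQSym`. With `A ⊕ₗ B` ordered so that all of
`A` is smaller than all of `B`, for every `σ ∈ Sₙ`,
`π(F_σ(A ⊕ B)) = Σ_{k=0}^n F_{Std(σ(1)⋯σ(k))}(A) ⊗ F_{Std(σ(k+1)⋯σ(n))}(B)`. -/
theorem coproduct_freeQuasiRibbon (A B : Type*) [LinearOrder A] [LinearOrder B]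
    [Fintype A] [Fintype B] {n : ℕ} (σ : Equiv.Perm (Fin n)) :
    piHom A B (FQR (A ⊕ₗ B) σ) =
      ∑ k : Fin (n + 1),
        (FQR A (std (fun i : Fin (k : ℕ) => σ ⟨(i : ℕ), by omega⟩))) ⊗ₜ[ℚ]
        (FQR B (std (fun i : Fin (n - (k : ℕ)) => σ ⟨(k : ℕ) + (i : ℕ), by omega⟩))) := by
  rw [FQR, map_sum, ← Finset.sum_fiberwise _ fun w => numLeft (w ∘ σ)]
  exact Finset.sum_congr rfl fun k _ => sum_piHom_wordAlg_fiber σ k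
end
end

section
/- Let P and Q be packed matrices and N ≥ 1. Then in ℚ[x₁,…,x_N]: Σ_{R ∈ ⧢(P,Q)} M_{Row(R)}(x₁,…,x_N) = M_{Row(P)}(x₁,…,x_N) · M_{Row(Q)}(x₁,…,x_N). (This says that the evaluation map Ev : MS_P ↦ M_{Row(P)} is an algebra homomorphism from MQSym onto the quasi-symmetric functions.) -/
open scoped Classical

noncomputable section

/-- A packed matrix: a matrix of nonnegative integers with no zero row and no zero column. -/
structure PackedMatrix where
  p : ℕ
  q : ℕ
  entry : Fin p → Fin q → ℕ
  rows_nonzero : ∀ i, ∃ j, entry i j ≠ 0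
  cols_nonzero : ∀ j, ∃ i, entry i j ≠ 0

/-- The ideal `ℚ[X]⁺` of polynomials with zero constant term, as a `ℚ`-submodule of
`ℚ[x₁,…,x_N]`. -/
def PolyPlus (N : ℕ) : Submodule ℚ (MvPolynomial (Fin N) ℚ) :=
  (RingHom.ker (MvPolynomial.constantCoeff (R := ℚ) (σ := Fin N))).restrictScalars ℚ

/-- The tensor algebra `ℚ{X} = T(ℚ[X]⁺)`. -/
abbrev QX (N : ℕ) := TensorAlgebra ℚ (PolyPlus N)

/-- The `j`-th column monomial `m_j = Π_i a_i^{M_{ij}}` of a packed matrix, for a choice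
`a : Fin p → Fin N` of `p` variables; it lies in `ℚ[X]⁺` since column `j` is nonzero. -/
def colMonomial (N : ℕ) (P : PackedMatrix) (a : Fin P.p → Fin N) (j : Fin P.q) :
    PolyPlus N :=
  ⟨∏ i, MvPolynomial.X (a i) ^ P.entry i j, by
    obtain ⟨i, hi⟩ := P.cols_nonzero j
    simp only [PolyPlus, Submodule.restrictScalars_mem, RingHom.mem_ker, map_prod, map_pow,
      MvPolynomial.constantCoeff_X]
    exact Finset.prod_eq_zero (Finset.mem_univ i) (zero_pow hi)⟩

/-- `A^M ∈ ℚ{X}` : the dot product `m₁ · m₂ ⋯ m_q` of the column monomials of `M` on the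
variable set `A` (given by a strictly increasing `a : Fin p → Fin N`). -/
def dotMonomial (N : ℕ) (P : PackedMatrix) (a : Fin P.p → Fin N) : QX N :=
  (List.ofFn fun j : Fin P.q => TensorAlgebra.ι ℚ (colMonomial N P a j)).prod

/-- `MS_M = Σ_{A ⊆ X, |A| = p} A^M ∈ ℚ{X}`. -/
def MS (N : ℕ) (P : PackedMatrix) : QX N :=
  ∑ a ∈ Finset.univ.filter (fun a : Fin P.p → Fin N => StrictMono a),
    dotMonomial N P a

/-- The augmented shuffle `⧢(P,Q)` of two packed matrices: all packed matrices obtained by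
inserting zero rows into `P` and `Q` so as to reach a common height and concatenating the
resulting matrices horizontally, keeping only the results with no zero row. Here `f` (resp.
`g`) records the positions of the rows of `P` (resp. `Q`) in the result. -/
def AugShuffle (P Q : PackedMatrix) : Set PackedMatrix :=
  {R | ∃ h : R.q = P.q + Q.q, ∃ (f : Fin P.p → Fin R.p) (g : Fin Q.p → Fin R.p),
    StrictMono f ∧ StrictMono g ∧
    (∀ i : Fin R.p, i ∈ Set.range f ∨ i ∈ Set.range g) ∧
    (∀ (i : Fin P.p) (j : Fin P.q),
      R.entry (f i) (Fin.cast h.symm (Fin.castAdd Q.q j)) = P.entry i j) ∧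
    (∀ i : Fin R.p, i ∉ Set.range f → ∀ j : Fin P.q,
      R.entry i (Fin.cast h.symm (Fin.castAdd Q.q j)) = 0) ∧
    (∀ (i : Fin Q.p) (j : Fin Q.q),
      R.entry (g i) (Fin.cast h.symm (Fin.natAdd P.q j)) = Q.entry i j) ∧
    (∀ i : Fin R.p, i ∉ Set.range g → ∀ j : Fin Q.q,
      R.entry i (Fin.cast h.symm (Fin.natAdd P.q j)) = 0)}

end

noncomputable section

/-- The row sums of a packed matrix (the composition `Row(P)`, as a function). -/
def rowSums (P : PackedMatrix) (i : Fin P.p) : ℕ :=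
  ∑ j, P.entry i j

/-- The monomial quasi-symmetric polynomial
`M_c(x₁,…,x_N) = Σ_{j₁<⋯<j_r} x_{j₁}^{c₁}⋯x_{j_r}^{c_r}`. -/
def MQS (N : ℕ) {r : ℕ} (c : Fin r → ℕ) : MvPolynomial (Fin N) ℚ :=
  ∑ j ∈ Finset.univ.filter (fun j : Fin r → Fin N => StrictMono j),
    ∏ t, MvPolynomial.X (j t) ^ c t

/-! A term of `M_{Row P} · M_{Row Q}` is a pair of increasing maps `a : [p] → [N]`,
`b : [q] → [N]`. It factors uniquely as `a = c ∘ f`, `b = c ∘ g` through the increasing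
enumeration `c` of `range a ∪ range b`, with `f`, `g` increasing and jointly surjective. Such
placements `(f, g)` are exactly the ways of inserting zero rows in the augmented shuffle, so
`(a, b)` corresponds to a matrix `R ∈ ⧢(P,Q)` together with an increasing `c : [height R] → [N]`,
and the monomial of `(a, b)` is the monomial of `c` with exponents `Row(R)`. -/

open Function

lemma Function.extend_ne_zero_iff {ι κ β : Type*} [Zero β] {f : ι → κ} (hf : Injective f)
    {g : ι → β} (hg : ∀ i, g i ≠ 0) (k : κ) : extend f g 0 k ≠ 0 ↔ k ∈ Set.range f := by
  refine ⟨fun h => by_contra fun hk => h (extend_apply' g (0 : κ → β) k hk), ?_⟩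
  rintro ⟨i, rfl⟩
  rw [hf.extend_apply]
  exact hg i

lemma Fintype.prod_pow_extend {ι κ M : Type*} [Fintype ι] [Fintype κ] [CommMonoid M]
    {f : ι → κ} (hf : Injective f) (u : κ → M) (w : ι → ℕ) :
    ∏ k, u k ^ extend f w 0 k = ∏ i, u (f i) ^ w i :=
  (Fintype.prod_of_injective f hf _ _
    (fun k hk => by rw [extend_apply' w (0 : κ → ℕ) k hk, Pi.zero_apply, pow_zero])
    (fun i => by rw [hf.extend_apply])).symm

lemma Function.sum_extend_apply {ι κ σ β : Type*} [Fintype σ] [AddCommMonoid β] (f : ι → κ)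
    (g : ι → σ → β) (k : κ) : ∑ j, extend f g 0 k j = extend f (fun i => ∑ j, g i j) 0 k := by
  simpa [Function.comp_def, ← Pi.zero_def] using apply_extend (fun v : σ → β => ∑ j, v j) f 0 k

lemma PackedMatrix.entry_ne_zero (P : PackedMatrix) (i : Fin P.p) : P.entry i ≠ 0 := fun h =>
  let ⟨j, hj⟩ := P.rows_nonzero i
  hj (congrFun h j)

/-- The rows of `P` and `Q` are sent to rows `f` and `g` of the augmented shuffle of height `r`. -/
structure ShuffleData (m n : ℕ) where
  r : ℕ
  f : Fin m → Fin r
  g : Fin n → Fin r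
  strictMono_f : StrictMono f
  strictMono_g : StrictMono g
  cover : ∀ t, t ∈ Set.range f ∨ t ∈ Set.range g

namespace ShuffleData

variable {m n : ℕ}

lemma range_f_union_range_g (D : ShuffleData m n) :
    Set.range D.f ∪ Set.range D.g = Set.univ :=
  Set.eq_univ_of_forall D.cover

lemma r_le (D : ShuffleData m n) : D.r ≤ m + n := by
  have hsurj : Surjective (Sum.elim D.f D.g) := fun t => by
    rcases D.cover t with ⟨i, hi⟩ | ⟨i, hi⟩
    exacts [⟨Sum.inl i, hi⟩, ⟨Sum.inr i, hi⟩]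
  simpa using Fintype.card_le_of_surjective _ hsurj

instance : Fintype (ShuffleData m n) :=
  Fintype.ofInjective
    (fun D => (⟨⟨D.r, Nat.lt_succ_of_le D.r_le⟩, D.f, D.g⟩ :
      Σ r : Fin (m + n + 1), (Fin m → Fin r) × (Fin n → Fin r)))
    (by
      rintro ⟨r, f, g⟩ ⟨r', f', g'⟩ h
      simp only [Sigma.mk.inj_iff, Fin.mk.injEq] at h
      obtain ⟨rfl, h⟩ := h
      obtain ⟨rfl, rfl⟩ := Prod.mk.inj (eq_of_heq h)
      rfl)

lemma range_comp_f_union_range_comp_g {α : Type*} (D : ShuffleData m n) (c : Fin D.r → α) :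
    Set.range (c ∘ D.f) ∪ Set.range (c ∘ D.g) = Set.range c := by
  rw [Set.range_comp, Set.range_comp, ← Set.image_union, D.range_f_union_range_g,
    Set.image_univ]

variable {α : Type*} [LinearOrder α]

lemma exists_strictMono_comp_eq {a : Fin m → α} {b : Fin n → α} (ha : StrictMono a)
    (hb : StrictMono b) :
    ∃ (D : ShuffleData m n) (c : Fin D.r → α), StrictMono c ∧ c ∘ D.f = a ∧ c ∘ D.g = b := by
  set s := Finset.univ.image a ∪ Finset.univ.image b
  set e := s.orderIsoOfFin rfl
  have ha' (i : Fin m) : a i ∈ s := Finset.mem_union_left _ (Finset.mem_image_of_mem a (by simp))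
  have hb' (i : Fin n) : b i ∈ s := Finset.mem_union_right _ (Finset.mem_image_of_mem b (by simp))
  refine ⟨⟨s.card, fun i => e.symm ⟨a i, ha' i⟩, fun i => e.symm ⟨b i, hb' i⟩,
    fun i j hij => e.symm.strictMono (Subtype.mk_lt_mk.2 (ha hij)),
    fun i j hij => e.symm.strictMono (Subtype.mk_lt_mk.2 (hb hij)), fun t => ?_⟩,
    fun t => e t, fun t t' htt' => e.strictMono htt', by ext; simp, by ext; simp⟩
  rcases Finset.mem_union.1 (e t).2 with ht | ht <;> obtain ⟨i, -, hi⟩ := Finset.mem_image.1 ht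
  · exact Or.inl ⟨i, e.symm_apply_eq.2 (Subtype.ext hi)⟩
  · exact Or.inr ⟨i, e.symm_apply_eq.2 (Subtype.ext hi)⟩

lemma sigma_eq_of_comp_eq {D D' : ShuffleData m n} {c : Fin D.r → α} {c' : Fin D'.r → α}
    (hc : StrictMono c) (hc' : StrictMono c') (hf : c ∘ D.f = c' ∘ D'.f)
    (hg : c ∘ D.g = c' ∘ D'.g) :
    (⟨D, c⟩ : Σ D : ShuffleData m n, Fin D.r → α) = ⟨D', c'⟩ := by
  have hrange : Set.range c = Set.range c' := by
    rw [← range_comp_f_union_range_comp_g, ← range_comp_f_union_range_comp_g, hf, hg]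
  have hr : D.r = D'.r := by
    have hcard := Nat.card_range_of_injective hc.injective
    rw [hrange, Nat.card_range_of_injective hc'.injective] at hcard
    simpa using hcard.symm
  obtain ⟨r, f, g⟩ := D
  obtain ⟨r', f', g'⟩ := D'
  obtain rfl : r = r' := hr
  obtain rfl : c = c' := (hc.range_inj hc').1 hrange
  obtain rfl : f = f' := hc.injective.comp_left hf
  obtain rfl : g = g' := hc.injective.comp_left hg
  rfl

lemma sum_sum_comp_eq_sum_sum [Fintype α] {β : Type*} [AddCommMonoid β]
    (F : (Fin m → α) → (Fin n → α) → β) :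
    ∑ D : ShuffleData m n, ∑ c ∈ Finset.univ.filter (fun c : Fin D.r → α => StrictMono c),
        F (c ∘ D.f) (c ∘ D.g) =
      ∑ a ∈ Finset.univ.filter (fun a : Fin m → α => StrictMono a),
        ∑ b ∈ Finset.univ.filter (fun b : Fin n → α => StrictMono b), F a b := by
  rw [Finset.sum_sigma', ← Finset.sum_product']
  refine Finset.sum_bij (fun x _ => (x.2 ∘ x.1.f, x.2 ∘ x.1.g)) ?_ ?_ ?_ (fun _ _ => rfl)
  · rintro ⟨D, c⟩ hc
    simp only [Finset.mem_sigma, Finset.mem_filter, Finset.mem_univ, true_and] at hc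
    simpa using ⟨hc.comp D.strictMono_f, hc.comp D.strictMono_g⟩
  · rintro ⟨D, c⟩ hc ⟨D', c'⟩ hc' h
    simp only [Finset.mem_sigma, Finset.mem_filter, Finset.mem_univ, true_and] at hc hc'
    exact sigma_eq_of_comp_eq hc hc' (congrArg Prod.fst h) (congrArg Prod.snd h)
  · rintro ⟨a, b⟩ hab
    simp only [Finset.mem_product, Finset.mem_filter, Finset.mem_univ, true_and] at hab
    obtain ⟨D, c, hc, rfl, rfl⟩ := exists_strictMono_comp_eq hab.1 hab.2
    exact ⟨⟨D, c⟩, by simpa using hc, rfl⟩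

end ShuffleData

/-- Reducible, so that `simp` identifies `Fin (shuffleMatrix P Q D).p` with `Fin D.r`. -/
abbrev shuffleMatrix (P Q : PackedMatrix) (D : ShuffleData P.p Q.p) : PackedMatrix where
  p := D.r
  q := P.q + Q.q
  entry i := Fin.append (extend D.f P.entry 0 i) (extend D.g Q.entry 0 i)
  rows_nonzero i := by
    rcases D.cover i with hi | hi
    · obtain ⟨j, hj⟩ := Function.ne_iff.1
        ((extend_ne_zero_iff D.strictMono_f.injective P.entry_ne_zero i).2 hi)
      exact ⟨Fin.castAdd _ j, by simpa using hj⟩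
    · obtain ⟨j, hj⟩ := Function.ne_iff.1
        ((extend_ne_zero_iff D.strictMono_g.injective Q.entry_ne_zero i).2 hi)
      exact ⟨Fin.natAdd _ j, by simpa using hj⟩
  cols_nonzero j := by
    refine Fin.addCases (fun j => ?_) (fun j => ?_) j
    · obtain ⟨i, hi⟩ := P.cols_nonzero j
      exact ⟨D.f i, by simpa [D.strictMono_f.injective.extend_apply] using hi⟩
    · obtain ⟨i, hi⟩ := Q.cols_nonzero j
      exact ⟨D.g i, by simpa [D.strictMono_g.injective.extend_apply] using hi⟩

section ShuffleMatrix

variable {P Q : PackedMatrix}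

lemma shuffleMatrix_mem_augShuffle (D : ShuffleData P.p Q.p) :
    shuffleMatrix P Q D ∈ AugShuffle P Q := by
  refine ⟨rfl, D.f, D.g, D.strictMono_f, D.strictMono_g, D.cover, ?_, ?_, ?_, ?_⟩
  · intro i j
    simp [D.strictMono_f.injective.extend_apply]
  · intro i hi j
    simp [extend_apply' P.entry (0 : Fin D.r → Fin P.q → ℕ) i hi]
  · intro i j
    simp [D.strictMono_g.injective.extend_apply]
  · intro i hi j
    simp [extend_apply' Q.entry (0 : Fin D.r → Fin Q.q → ℕ) i hi]

lemma exists_shuffleMatrix_eq_of_mem_augShuffle {R : PackedMatrix} (hR : R ∈ AugShuffle P Q) :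
    ∃ D, shuffleMatrix P Q D = R := by
  obtain ⟨p, q, e, _, _⟩ := R
  obtain ⟨hq, f, g, hf, hg, cover, hPf, hPz, hQg, hQz⟩ := hR
  dsimp only at hq
  subst hq
  refine ⟨⟨p, f, g, hf, hg, cover⟩, ?_⟩
  simp only [shuffleMatrix, PackedMatrix.mk.injEq, heq_eq_eq, true_and]
  funext i j
  refine Fin.addCases (fun j => ?_) (fun j => ?_) j
  · by_cases hi : i ∈ Set.range f
    · obtain ⟨i, rfl⟩ := hi
      simpa [hf.injective.extend_apply] using (hPf i j).symm
    · simpa [extend_apply' _ _ _ hi] using (hPz i hi j).symm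
  · by_cases hi : i ∈ Set.range g
    · obtain ⟨i, rfl⟩ := hi
      simpa [hg.injective.extend_apply] using (hQg i j).symm
    · simpa [extend_apply' _ _ _ hi] using (hQz i hi j).symm

lemma augShuffle_eq_range_shuffleMatrix : AugShuffle P Q = Set.range (shuffleMatrix P Q) :=
  Set.ext fun _ => ⟨exists_shuffleMatrix_eq_of_mem_augShuffle,
    fun ⟨D, hD⟩ => hD ▸ shuffleMatrix_mem_augShuffle D⟩

lemma shuffleMatrix_injective : Injective (shuffleMatrix P Q) := by
  rintro ⟨r, f, g, hf, hg, _⟩ ⟨r', f', g', hf', hg', _⟩ h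
  obtain rfl : r = r' := congrArg PackedMatrix.p h
  simp only [shuffleMatrix, PackedMatrix.mk.injEq, heq_eq_eq, true_and] at h
  have hP (i : Fin r) : extend f P.entry 0 i = extend f' P.entry 0 i :=
    funext fun j => by simpa using congrFun (congrFun h i) (Fin.castAdd Q.q j)
  have hQ (i : Fin r) : extend g Q.entry 0 i = extend g' Q.entry 0 i :=
    funext fun j => by simpa using congrFun (congrFun h i) (Fin.natAdd P.q j)
  obtain rfl : f = f' := (hf.range_inj hf').1 <| Set.ext fun i => by
    rw [← extend_ne_zero_iff hf.injective P.entry_ne_zero, hP,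
      extend_ne_zero_iff hf'.injective P.entry_ne_zero]
  obtain rfl : g = g' := (hg.range_inj hg').1 <| Set.ext fun i => by
    rw [← extend_ne_zero_iff hg.injective Q.entry_ne_zero, hQ,
      extend_ne_zero_iff hg'.injective Q.entry_ne_zero]
  rfl

lemma rowSums_shuffleMatrix (D : ShuffleData P.p Q.p) :
    rowSums (shuffleMatrix P Q D) = extend D.f (rowSums P) 0 + extend D.g (rowSums Q) 0 := by
  funext t
  simp only [rowSums, Fin.sum_univ_add, Fin.append_left, Fin.append_right, sum_extend_apply]
  rfl

lemma prod_pow_rowSums_shuffleMatrix {M : Type*} [CommMonoid M] (D : ShuffleData P.p Q.p)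
    (u : Fin D.r → M) :
    ∏ t, u t ^ rowSums (shuffleMatrix P Q D) t =
      (∏ i, u (D.f i) ^ rowSums P i) * ∏ i, u (D.g i) ^ rowSums Q i := by
  simp only [rowSums_shuffleMatrix, Pi.add_apply, pow_add, Finset.prod_mul_distrib,
    Fintype.prod_pow_extend D.strictMono_f.injective,
    Fintype.prod_pow_extend D.strictMono_g.injective]

end ShuffleMatrix

theorem row_evaluation_hom_general (N : ℕ) (P Q : PackedMatrix) :
    ∑ᶠ R ∈ AugShuffle P Q, MQS N (rowSums R) =
      MQS N (rowSums P) * MQS N (rowSums Q) := by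
  rw [augShuffle_eq_range_shuffleMatrix, finsum_mem_range shuffleMatrix_injective,
    finsum_eq_sum_of_fintype]
  simp only [MQS, Finset.sum_mul_sum, prod_pow_rowSums_shuffleMatrix]
  exact ShuffleData.sum_sum_comp_eq_sum_sum fun a b =>
    (∏ i, (MvPolynomial.X (a i) : MvPolynomial (Fin N) ℚ) ^ rowSums P i) *
      ∏ i, MvPolynomial.X (b i) ^ rowSums Q i

/-- `Σ_{R ∈ ⧢(P,Q)} M_{Row(R)} = M_{Row(P)} · M_{Row(Q)}` : the evaluation
`MS_P ↦ M_{Row(P)}` is an algebra homomorphism from `MQSym` onto quasi-symmetric functions. -/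
theorem row_evaluation_hom (N : ℕ) (hN : 1 ≤ N) (P Q : PackedMatrix) :
    ∑ᶠ R ∈ AugShuffle P Q, MQS N (rowSums R) =
      MQS N (rowSums P) * MQS N (rowSums Q) :=
  row_evaluation_hom_general N P Q

end
end

section
/- For every d ≥ 1, the number of packed matrices of degree d (which is the dimension of the homogeneous component MQSym_d of the algebra of matrix quasi-symmetric functions) equals the sum of the convergent double series Σ_{l=1}^∞ Σ_{h=1}^∞ (1/2)^{l+h+2} · binom(d+lh−1, lh−1). -/
/-- The degree of a packed matrix: the sum of its entries. -/
def PackedMatrix.degree (P : PackedMatrix) : ℕ :=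
  ∑ i, ∑ j, P.entry i j

/-!
Sorting an `L × H` matrix of degree `d` by its row and column supports gives
`binom(LH + d - 1, d) = Σ_{p,q} binom(L, p) binom(H, q) N(p, q)`, where `N(p, q)` counts the packed
`p × q` matrices of degree `d`. Since `Σ_{L ≥ 1} 2^{-(L+1)} binom(L, p) = 1` for every `p ≥ 1`,
weighting by `2^{-(L+1)} 2^{-(H+1)}` and summing over `L, H ≥ 1` leaves `Σ_{p,q} N(p, q)`; the
terms with `p = 0` or `q = 0` vanish because `d ≥ 1`.
-/

open Finset

variable {ι κ : Type*}

def IsPacked (A : ι → κ → ℕ) : Prop :=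
  (∀ i, ∃ j, A i j ≠ 0) ∧ ∀ j, ∃ i, A i j ≠ 0

lemma IsPacked.transpose {A : ι → κ → ℕ} (hA : IsPacked A) : IsPacked fun j i => A i j :=
  ⟨hA.2, hA.1⟩

section

variable [Fintype ι] [Fintype κ]

lemma IsPacked.card_rows_le {A : ι → κ → ℕ} (hA : IsPacked A) :
    Fintype.card ι ≤ ∑ i, ∑ j, A i j := by
  rw [Fintype.card_eq_sum_ones]
  refine sum_le_sum fun i _ => ?_
  obtain ⟨j, hj⟩ := hA.1 i
  exact (Nat.one_le_iff_ne_zero.2 hj).trans (single_le_sum (fun _ _ => Nat.zero_le _) (mem_univ j))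

lemma IsPacked.card_cols_le {A : ι → κ → ℕ} (hA : IsPacked A) :
    Fintype.card κ ≤ ∑ i, ∑ j, A i j :=
  sum_comm (f := A) ▸ hA.transpose.card_rows_le

noncomputable def packedCount (p q d : ℕ) : ℕ :=
  Nat.card {A : Fin p → Fin q → ℕ // IsPacked A ∧ ∑ i, ∑ j, A i j = d}

lemma card_packed_eq_packedCount (d : ℕ) :
    Nat.card {A : ι → κ → ℕ // IsPacked A ∧ ∑ i, ∑ j, A i j = d} =
      packedCount (Fintype.card ι) (Fintype.card κ) d := by
  let e := Fintype.equivFin ι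
  let f := Fintype.equivFin κ
  refine Nat.card_congr ((e.arrowCongr (f.arrowCongr (.refl ℕ))).subtypeEquiv fun A => ?_)
  simp [IsPacked, Equiv.arrowCongr_apply, e.symm.forall_congr_left, f.symm.forall_congr_left,
    e.symm.exists_congr_left, f.symm.exists_congr_left, Equiv.sum_comp,
    e.symm.sum_comp fun i => ∑ j, A i j]

lemma packedCount_eq_zero {p q d : ℕ}
    (h : ∀ A : Fin p → Fin q → ℕ, IsPacked A → ∑ i, ∑ j, A i j ≠ d) : packedCount p q d = 0 :=
  Nat.card_eq_zero.2 (.inl ⟨fun A => h A.1 A.2.1 A.2.2⟩)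

lemma packedCount_eq_zero_of_lt_left {p q d : ℕ} (hp : d < p) : packedCount p q d = 0 :=
  packedCount_eq_zero fun A hA hd => by
    have := hA.card_rows_le
    simp only [Fintype.card_fin, hd] at this
    omega

lemma packedCount_eq_zero_of_lt_right {p q d : ℕ} (hq : d < q) : packedCount p q d = 0 :=
  packedCount_eq_zero fun A hA hd => by
    have := hA.card_cols_le
    simp only [Fintype.card_fin, hd] at this
    omega

lemma packedCount_zero_left {q d : ℕ} (hd : d ≠ 0) : packedCount 0 q d = 0 :=
  packedCount_eq_zero fun A _ hA => hd (by simp [← hA])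

lemma packedCount_zero_right {p d : ℕ} (hd : d ≠ 0) : packedCount p 0 d = 0 :=
  packedCount_eq_zero fun A _ hA => hd (by simp [← hA])

lemma sum_finset_apply_card_of_eq_zero {f : ℕ → ℕ} {d : ℕ} (hf : ∀ p, d < p → f p = 0) :
    ∑ s : Finset ι, f #s = ∑ p ∈ range (d + 1), (Fintype.card ι).choose p * f p := by
  classical
  rw [← powerset_univ, sum_powerset_apply_card, card_univ]
  simp only [smul_eq_mul]
  rw [← eventually_constant_sum (N := Fintype.card ι + 1) (n := Fintype.card ι + d + 1)
      (fun p hp => by rw [Nat.choose_eq_zero_of_lt hp, zero_mul]) (by omega),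
    eventually_constant_sum (N := d + 1) (fun p hp => by rw [hf p hp, mul_zero]) (by omega)]

variable {R : Finset ι} {C : Finset κ}

def rowSupport (A : ι → κ → ℕ) : Finset ι := {i | ∃ j, A i j ≠ 0}

def colSupport (A : ι → κ → ℕ) : Finset κ := {j | ∃ i, A i j ≠ 0}

lemma mem_supports_of_ne_zero {A : ι → κ → ℕ} {i : ι} {j : κ} (h : A i j ≠ 0) :
    i ∈ rowSupport A ∧ j ∈ colSupport A := by
  simp only [rowSupport, colSupport, mem_filter_univ]
  exact ⟨⟨j, h⟩, ⟨i, h⟩⟩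

lemma isPacked_restrict_supports (A : ι → κ → ℕ) :
    IsPacked fun (i : rowSupport A) (j : colSupport A) => A i j := by
  refine ⟨fun ⟨i, hi⟩ => ?_, fun ⟨j, hj⟩ => ?_⟩
  · obtain ⟨j, hj⟩ := (mem_filter_univ _).1 hi
    exact ⟨⟨j, (mem_supports_of_ne_zero hj).2⟩, hj⟩
  · obtain ⟨i, hi⟩ := (mem_filter_univ _).1 hj
    exact ⟨⟨i, (mem_supports_of_ne_zero hi).1⟩, hi⟩

lemma eq_zero_of_supports_subset {A : ι → κ → ℕ} (hR : rowSupport A ⊆ R)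
    (hC : colSupport A ⊆ C) {i : ι} {j : κ} (hij : ¬(i ∈ R ∧ j ∈ C)) : A i j = 0 := by
  by_contra h
  exact hij ⟨hR (mem_supports_of_ne_zero h).1, hC (mem_supports_of_ne_zero h).2⟩

lemma sum_restrict_of_supports_subset {A : ι → κ → ℕ} (hR : rowSupport A ⊆ R)
    (hC : colSupport A ⊆ C) : ∑ i : R, ∑ j : C, A i j = ∑ i, ∑ j, A i j := by
  rw [sum_coe_sort R fun i => ∑ j : C, A i j, ← sum_subset (subset_univ R)]
  · refine sum_congr rfl fun i hi => ?_
    rw [sum_coe_sort C, ← sum_subset (subset_univ C)]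
    exact fun j _ hj => eq_zero_of_supports_subset hR hC fun h => hj h.2
  · exact fun i _ hi => sum_eq_zero fun j _ => eq_zero_of_supports_subset hR hC fun h => hi h.1

end

section

variable [DecidableEq ι] [DecidableEq κ] {R : Finset ι} {C : Finset κ}

def extendByZero (R : Finset ι) (C : Finset κ) (B : R → C → ℕ) : ι → κ → ℕ :=
  fun i j => if h : i ∈ R ∧ j ∈ C then B ⟨i, h.1⟩ ⟨j, h.2⟩ else 0

@[simp]
lemma extendByZero_coe (B : R → C → ℕ) (i : R) (j : C) : extendByZero R C B i j = B i j := by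
  simp [extendByZero]

variable [Fintype ι] [Fintype κ]

lemma extendByZero_restrict {A : ι → κ → ℕ} (hR : rowSupport A ⊆ R) (hC : colSupport A ⊆ C) :
    extendByZero R C (fun i j => A i j) = A := by
  funext i j
  by_cases h : i ∈ R ∧ j ∈ C
  · simp [extendByZero, h]
  · rw [extendByZero, dif_neg h, eq_comm]
    exact eq_zero_of_supports_subset hR hC h

lemma supports_extendByZero_subset (B : R → C → ℕ) :
    rowSupport (extendByZero R C B) ⊆ R ∧ colSupport (extendByZero R C B) ⊆ C := by
  constructor
  · intro i hi
    obtain ⟨j, hj⟩ := (mem_filter_univ _).1 hi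
    by_contra h
    simp [extendByZero, h] at hj
  · intro j hj
    obtain ⟨i, hi⟩ := (mem_filter_univ _).1 hj
    by_contra h
    simp [extendByZero, h] at hi

lemma supports_extendByZero {B : R → C → ℕ} (hB : IsPacked B) :
    rowSupport (extendByZero R C B) = R ∧ colSupport (extendByZero R C B) = C := by
  obtain ⟨hR, hC⟩ := supports_extendByZero_subset B
  refine ⟨hR.antisymm fun i hi => ?_, hC.antisymm fun j hj => ?_⟩
  · obtain ⟨j, hj⟩ := hB.1 ⟨i, hi⟩
    rw [← extendByZero_coe B] at hj
    exact (mem_supports_of_ne_zero hj).1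
  · obtain ⟨i, hi⟩ := hB.2 ⟨j, hj⟩
    rw [← extendByZero_coe B] at hi
    exact (mem_supports_of_ne_zero hi).2

lemma sum_extendByZero (B : R → C → ℕ) :
    ∑ i, ∑ j, extendByZero R C B i j = ∑ i, ∑ j, B i j := by
  obtain ⟨hR, hC⟩ := supports_extendByZero_subset B
  simp only [← sum_restrict_of_supports_subset hR hC, extendByZero_coe]

end

section

variable [Fintype ι] [Fintype κ] [DecidableEq ι] [DecidableEq κ]

variable (ι κ) in
noncomputable def sumEqEquivSym (d : ℕ) :
    {A : ι → κ → ℕ // ∑ i, ∑ j, A i j = d} ≃ Sym (ι × κ) d :=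
  ((Equiv.curry ι κ ℕ).symm.subtypeEquiv fun A => by simp [Fintype.sum_prod_type]).trans
    (Sym.equivNatSumOfFintype _ d).symm

variable (ι κ) in
lemma card_sumEq (d : ℕ) :
    Nat.card {A : ι → κ → ℕ // ∑ i, ∑ j, A i j = d} =
      (Fintype.card ι * Fintype.card κ + d - 1).choose d := by
  rw [Nat.card_congr (sumEqEquivSym ι κ d), Nat.card_eq_fintype_card, Sym.card_sym_eq_choose,
    Fintype.card_prod]

instance (d : ℕ) : Finite {A : ι → κ → ℕ // ∑ i, ∑ j, A i j = d} :=
  .of_equiv _ (sumEqEquivSym ι κ d).symm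

instance (d : ℕ) : Finite {A : ι → κ → ℕ // IsPacked A ∧ ∑ i, ∑ j, A i j = d} :=
  .of_injective _ (Subtype.impEmbedding _ (fun A => ∑ i, ∑ j, A i j = d) fun _ h => h.2).injective

def supportsFiberEquiv (s : Finset ι × Finset κ) (d : ℕ) :
    {A : {A : ι → κ → ℕ // ∑ i, ∑ j, A i j = d} // (rowSupport A.1, colSupport A.1) = s} ≃
      {B : s.1 → s.2 → ℕ // IsPacked B ∧ ∑ i, ∑ j, B i j = d} where
  toFun A := ⟨fun i j => A.1.1 i j, by
    obtain ⟨⟨A, hA⟩, rfl⟩ := A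
    exact ⟨isPacked_restrict_supports A, (sum_restrict_of_supports_subset le_rfl le_rfl).trans hA⟩⟩
  invFun B := ⟨⟨extendByZero s.1 s.2 B.1, (sum_extendByZero B.1).trans B.2.2⟩,
    Prod.ext (supports_extendByZero B.2.1).1 (supports_extendByZero B.2.1).2⟩
  left_inv := by
    rintro ⟨⟨A, hA⟩, rfl⟩
    exact Subtype.ext (Subtype.ext (extendByZero_restrict le_rfl le_rfl))
  right_inv B := Subtype.ext (funext₂ fun i j => extendByZero_coe B.1 i j)

def sumEqEquivSigmaPacked (d : ℕ) :
    {A : ι → κ → ℕ // ∑ i, ∑ j, A i j = d} ≃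
      Σ s : Finset ι × Finset κ, {B : s.1 → s.2 → ℕ // IsPacked B ∧ ∑ i, ∑ j, B i j = d} :=
  (Equiv.sigmaFiberEquiv fun A => (rowSupport A.1, colSupport A.1)).symm.trans
    (Equiv.sigmaCongrRight fun s => supportsFiberEquiv s d)

lemma card_sumEq_eq_sum_packedCount (d : ℕ) :
    Nat.card {A : ι → κ → ℕ // ∑ i, ∑ j, A i j = d} =
      ∑ p ∈ range (d + 1), (Fintype.card ι).choose p *
        ∑ q ∈ range (d + 1), (Fintype.card κ).choose q * packedCount p q d := by
  rw [Nat.card_congr (sumEqEquivSigmaPacked d), Nat.card_sigma, Fintype.sum_prod_type]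
  simp only [card_packed_eq_packedCount, Fintype.card_coe]
  rw [sum_finset_apply_card_of_eq_zero (f := fun p => ∑ C : Finset κ, packedCount p #C d)
    fun p hp => sum_eq_zero fun C _ => packedCount_eq_zero_of_lt_left hp]
  refine sum_congr rfl fun p _ => ?_
  rw [sum_finset_apply_card_of_eq_zero (f := fun q => packedCount p q d)
    fun q hq => packedCount_eq_zero_of_lt_right hq]

end

def PackedMatrix.degreeEquivSigma (d : ℕ) :
    {P : PackedMatrix // P.degree = d} ≃
      Σ pq : ℕ × ℕ, {A : Fin pq.1 → Fin pq.2 → ℕ // IsPacked A ∧ ∑ i, ∑ j, A i j = d} where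
  toFun P := ⟨(P.1.p, P.1.q), P.1.entry, ⟨P.1.rows_nonzero, P.1.cols_nonzero⟩, P.2⟩
  invFun A := ⟨⟨A.1.1, A.1.2, A.2.1, A.2.2.1.1, A.2.2.1.2⟩, A.2.2.2⟩
  left_inv _ := rfl
  right_inv _ := rfl

lemma card_packedMatrix_degree_eq_sum_packedCount (d : ℕ) :
    Nat.card {P : PackedMatrix // P.degree = d} =
      ∑ p ∈ range (d + 1), ∑ q ∈ range (d + 1), packedCount p q d := by
  have hsmall : ∀ pq : ℕ × ℕ,
      {A : Fin pq.1 → Fin pq.2 → ℕ // IsPacked A ∧ ∑ i, ∑ j, A i j = d} →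
        pq ∈ range (d + 1) ×ˢ range (d + 1) := by
    rintro ⟨p, q⟩ ⟨A, hA, rfl⟩
    simpa [Nat.lt_succ_iff] using And.intro hA.card_rows_le hA.card_cols_le
  rw [Nat.card_congr ((PackedMatrix.degreeEquivSigma d).trans
    (Equiv.sigmaSubtypeEquivOfSubset _ _ hsmall).symm), Nat.card_sigma]
  exact (sum_coe_sort _ fun pq => packedCount pq.1 pq.2 d).trans (sum_product _ _ _)

lemma hasSum_choose_mul_half_pow (q : ℕ) :
    HasSum (fun n : ℕ => (n.choose q : ℝ) * (1 / 2) ^ (n + 1)) 1 := by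
  have hgeom := (hasSum_choose_mul_geometric_of_norm_lt_one (𝕜 := ℝ) q
    (r := 1 / 2) (by norm_num)).mul_right ((1 / 2) ^ (q + 1))
  have hsum : 1 / (1 - 1 / 2 : ℝ) ^ (q + 1) * (1 / 2) ^ (q + 1) = 1 := by
    rw [div_mul_eq_mul_div, one_mul, ← div_pow]; norm_num
  have hinit : ∑ i ∈ range q, (i.choose q : ℝ) * (1 / 2) ^ (i + 1) = 0 :=
    sum_eq_zero fun i hi => by simp [Nat.choose_eq_zero_of_lt (mem_range.1 hi)]
  rw [← hasSum_nat_add_iff' q, hinit, sub_zero]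
  simpa only [hsum, mul_assoc, ← pow_add, add_assoc] using hgeom

lemma hasSum_succ_choose_mul_half_pow {q : ℕ} (hq : q ≠ 0) :
    HasSum (fun n : ℕ => ((n + 1).choose q : ℝ) * (1 / 2) ^ (n + 2)) 1 := by
  simpa [Nat.choose_eq_zero_of_lt (Nat.pos_of_ne_zero hq)] using
    (hasSum_nat_add_iff' 1).2 (hasSum_choose_mul_half_pow q)

lemma hasSum_sum_succ_choose_mul_half_pow_mul {s : Finset ℕ} {f : ℕ → ℝ} (hf : f 0 = 0) :
    HasSum (fun n : ℕ => ∑ p ∈ s, ((n + 1).choose p : ℝ) * (1 / 2) ^ (n + 2) * f p)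
      (∑ p ∈ s, f p) := by
  refine hasSum_sum fun p _ => ?_
  rcases eq_or_ne p 0 with rfl | hp
  · simp [hf]
  · simpa using (hasSum_succ_choose_mul_half_pow hp).mul_right (f p)

lemma half_pow_mul_choose_eq_sum_packedCount (d l h : ℕ) :
    (1 / 2 : ℝ) ^ ((l + 1) + (h + 1) + 2) *
        (d + (l + 1) * (h + 1) - 1).choose ((l + 1) * (h + 1) - 1) =
      ∑ p ∈ range (d + 1), ((l + 1).choose p : ℝ) * (1 / 2) ^ (l + 2) *
        ∑ q ∈ range (d + 1), ((h + 1).choose q : ℝ) * (1 / 2) ^ (h + 2) * packedCount p q d := by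
  obtain ⟨k, hk⟩ : ∃ k, (l + 1) * (h + 1) = k + 1 := ⟨l * h + l + h, by ring⟩
  have hcard := card_sumEq_eq_sum_packedCount (ι := Fin (l + 1)) (κ := Fin (h + 1)) d
  rw [card_sumEq, Fintype.card_fin, Fintype.card_fin, hk,
    show k + 1 + d - 1 = d + k by omega, Nat.choose_symm_add] at hcard
  rw [hk, show d + (k + 1) - 1 = d + k by omega, Nat.add_sub_cancel, hcard]
  push_cast
  simp only [mul_sum]
  refine sum_congr rfl fun p _ => sum_congr rfl fun q _ => ?_
  ring

/-- The number of packed matrices of degree `d ≥ 1` (that is,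
`dim MQSym_d`) equals `Σ_{l,h ≥ 1} (1/2)^{l+h+2} · binom(d+lh−1, lh−1)`. -/
theorem card_packedMatrix_degree (d : ℕ) (hd : 1 ≤ d) :
    (Nat.card {P : PackedMatrix // P.degree = d} : ℝ) =
      ∑' (l : ℕ) (h : ℕ),
        (1 / 2 : ℝ) ^ ((l + 1) + (h + 1) + 2) *
          (Nat.choose (d + (l + 1) * (h + 1) - 1) ((l + 1) * (h + 1) - 1)) := by
  have hd0 : d ≠ 0 := by omega
  have hinner : ∀ l : ℕ, HasSum (fun h : ℕ => (1 / 2 : ℝ) ^ ((l + 1) + (h + 1) + 2) *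
      (d + (l + 1) * (h + 1) - 1).choose ((l + 1) * (h + 1) - 1))
      (∑ p ∈ range (d + 1), ((l + 1).choose p : ℝ) * (1 / 2) ^ (l + 2) *
        ∑ q ∈ range (d + 1), (packedCount p q d : ℝ)) := fun l => by
    simp only [half_pow_mul_choose_eq_sum_packedCount]
    exact hasSum_sum fun p _ => (hasSum_sum_succ_choose_mul_half_pow_mul
      (by simp [packedCount_zero_right hd0])).mul_left _
  have houter := hasSum_sum_succ_choose_mul_half_pow_mul (s := range (d + 1))
    (f := fun p => ∑ q ∈ range (d + 1), (packedCount p q d : ℝ))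
    (by simp [packedCount_zero_left hd0])
  rw [tsum_congr fun l => (hinner l).tsum_eq, houter.tsum_eq,
    card_packedMatrix_degree_eq_sum_packedCount]
  push_cast
  rfl
end
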